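/- arXiv:math/0106123 — 2 statements merged into one kernel-verified Lean document; each statement's English description precedes it below -/
import Mathlib

section
/- For every integer L ≥ 0 and every natural number n, the rational number b_L(n) is a positive integer. -/
/-!
Write `f = ₀F_L − 1` and `E = exp f`. Differentiating gives `E' = E f'`, i.e.
`(n+1) [zⁿ⁺¹]E = ∑_{k ≤ n} [zᵏ]E · [zⁿ⁻ᵏ]f'`, and after multiplying by `((n+1)!)^{L+1}` this
becomes the recurrence `b(n+1) = ∑_{k ≤ n} C(n,k) C(n+1,k)^L b(k)` with `b(0) = 1`.
Its coefficients are natural numbers, so every `b(n)` is one, and `b(n+1) ≥ b(0) = 1`.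
-/

open PowerSeries Finset

/-- The series `₀F_L(1,…,1;z) − 1 = ∑_{k≥1} z^k/(k!)^{L+1}` over `ℚ`. -/
noncomputable def hypFsub1 (L : ℕ) : PowerSeries ℚ :=
  PowerSeries.mk fun k => if k = 0 then 0 else 1 / (k.factorial : ℚ) ^ (L + 1)

/-- The exponential `exp f = ∑_{l≥0} f^l / l!` of a power series `f` with zero
constant term (for such `f`, `coeff n (f^l) = 0` for `l > n`, so the finite sum
below is the full exponential series). -/
noncomputable def expPS (f : PowerSeries ℚ) : PowerSeries ℚ :=
  PowerSeries.mk fun n =>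
    ∑ l ∈ Finset.range (n + 1), PowerSeries.coeff n (f ^ l) / (l.factorial : ℚ)

/-- `b_L(n) = (n!)^{L+1} · [z^n] exp(₀F_L(z) − 1)`. -/
noncomputable def bL (L n : ℕ) : ℚ :=
  (n.factorial : ℚ) ^ (L + 1) * PowerSeries.coeff n (expPS (hypFsub1 L))

/-- `S_L(n,l) = ((n!)^{L+1}/l!) · [z^n] (₀F_L(z) − 1)^l`, the generalized
Stirling numbers of the second kind of type `L`. -/
noncomputable def SL (L n l : ℕ) : ℚ :=
  (n.factorial : ℚ) ^ (L + 1) / (l.factorial : ℚ) *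
    PowerSeries.coeff n (hypFsub1 L ^ l)

/-- The series `∑_{k≥p+1} z^k/(k!)^{L+1}` over `ℚ`. -/
noncomputable def hypFtail (L p : ℕ) : PowerSeries ℚ :=
  PowerSeries.mk fun k => if k ≤ p then 0 else 1 / (k.factorial : ℚ) ^ (L + 1)

/-- `b_L(p,n) = (n!)^{L+1} · [z^n] exp(∑_{k≥p+1} z^k/(k!)^{L+1})`. -/
noncomputable def bLp (L p n : ℕ) : ℚ :=
  (n.factorial : ℚ) ^ (L + 1) * PowerSeries.coeff n (expPS (hypFtail L p))

open scoped Nat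

section ExpPS

variable {f : ℚ⟦X⟧}

lemma coeff_expPS_eq_sum_range (hf : constantCoeff f = 0) {n N : ℕ} (hn : n ≤ N) :
    coeff n (expPS f) = ∑ l ∈ range (N + 1), coeff n (f ^ l) / (l ! : ℚ) := by
  rw [expPS, coeff_mk]
  refine sum_subset (range_subset_range.2 (by omega)) fun l _ hl => ?_
  have hXl : (X : ℚ⟦X⟧) ^ l ∣ f ^ l := pow_dvd_pow_of_dvd (X_dvd_iff.mpr hf) l
  rw [X_pow_dvd_iff.mp hXl n (by simp at hl; omega), zero_div]

lemma derivative_expPS (hf : constantCoeff f = 0) :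
    d⁄dX ℚ (expPS f) = expPS f * d⁄dX ℚ f := by
  ext n
  have hterm : ∀ m : ℕ, coeff (n + 1) (f ^ (m + 1)) / ((m + 1)! : ℚ) * (n + 1) =
      coeff n (f ^ m * d⁄dX ℚ f) / (m ! : ℚ) := by
    intro m
    have hpow := congrArg (coeff n) (derivative_pow f (m + 1))
    rw [coeff_derivative, add_tsub_cancel_right, mul_assoc, ← map_natCast (C (R := ℚ)),
      coeff_C_mul] at hpow
    rw [div_mul_eq_mul_div, hpow, Nat.factorial_succ]
    push_cast
    field_simp
  calc coeff n (d⁄dX ℚ (expPS f))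
      = ∑ m ∈ range (n + 1), coeff n (f ^ m * d⁄dX ℚ f) / (m ! : ℚ) := by
        rw [coeff_derivative, expPS, coeff_mk, sum_mul, sum_range_succ']
        simp [hterm]
    _ = ∑ p ∈ antidiagonal n, ∑ m ∈ range (n + 1),
          coeff p.1 (f ^ m) / (m ! : ℚ) * coeff p.2 (d⁄dX ℚ f) := by
        simp_rw [coeff_mul, sum_div]
        rw [sum_comm]
        simp_rw [div_mul_eq_mul_div]
    _ = coeff n (expPS f * d⁄dX ℚ f) := by
        rw [coeff_mul]
        refine sum_congr rfl fun p hp => ?_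
        rw [← sum_mul, coeff_expPS_eq_sum_range hf (HasAntidiagonal.antidiagonal.fst_le hp)]

end ExpPS

lemma constantCoeff_hypFsub1 (L : ℕ) : constantCoeff (hypFsub1 L) = 0 := by
  simp [← coeff_zero_eq_constantCoeff_apply, hypFsub1]

lemma coeff_derivative_hypFsub1 (L j : ℕ) :
    coeff j (d⁄dX ℚ (hypFsub1 L)) = (j + 1 : ℚ) / ((j + 1)! : ℚ) ^ (L + 1) := by
  simp [coeff_derivative, hypFsub1, inv_mul_eq_div]

lemma coeff_expPS_hypFsub1 (L n : ℕ) :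
    coeff n (expPS (hypFsub1 L)) = bL L n / (n ! : ℚ) ^ (L + 1) := by
  rw [bL, mul_div_cancel_left₀ _ (by positivity)]

lemma bL_zero (L : ℕ) : bL L 0 = 1 := by
  simp [bL, expPS]

lemma cast_choose_mul_choose_pow {n k : ℕ} (L : ℕ) (hk : k ≤ n) :
    ((n.choose k * (n + 1).choose k ^ L : ℕ) : ℚ) =
      ((n + 1)! : ℚ) ^ (L + 1) * (n + 1 - k : ℕ) /
        ((n + 1) * (k ! * (n + 1 - k)! : ℚ) ^ (L + 1)) := by
  have hsucc : (n.choose k : ℚ) = (n + 1).choose k * (n + 1 - k : ℕ) / (n + 1) :=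
    eq_div_of_mul_eq (by positivity) (by exact_mod_cast Nat.choose_mul_succ_eq n k)
  have hfact : ((n + 1).choose k : ℚ) = (n + 1)! / (k ! * (n + 1 - k)!) :=
    Nat.cast_choose ℚ (by omega)
  push_cast
  rw [hsucc, hfact, div_pow, mul_pow]
  field_simp
  ring

lemma bL_succ (L n : ℕ) :
    bL L (n + 1) =
      ∑ k ∈ range (n + 1), ((n.choose k * (n + 1).choose k ^ L : ℕ) : ℚ) * bL L k := by
  have hcoeff := congrArg (coeff n) (derivative_expPS (constantCoeff_hypFsub1 L))
  rw [coeff_derivative, coeff_mul, Nat.sum_antidiagonal_eq_sum_range_succ_mk] at hcoeff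
  rw [bL, ← mul_div_cancel_right₀ (coeff _ _) (show (n + 1 : ℚ) ≠ 0 by positivity), hcoeff,
    mul_div_assoc', mul_sum, sum_div]
  refine sum_congr rfl fun k hk => ?_
  have hk : k ≤ n := Nat.lt_succ_iff.mp (mem_range.mp hk)
  rw [coeff_expPS_hypFsub1, coeff_derivative_hypFsub1, cast_choose_mul_choose_pow L hk,
    show n - k + 1 = n + 1 - k by omega]
  push_cast [Nat.cast_sub hk, Nat.cast_sub (show k ≤ n + 1 by omega)]
  field_simp
  ring

def bNat (L : ℕ) : ℕ → ℕ
  | 0 => 1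
  | n + 1 => ∑ k : Fin (n + 1), n.choose k * (n + 1).choose k ^ L * bNat L k

lemma bNat_pos (L n : ℕ) : 0 < bNat L n := by
  cases n with
  | zero => simp [bNat]
  | succ n =>
    rw [bNat, Fin.sum_univ_succ]
    exact Nat.lt_add_right _ (by simp [bNat.eq_1])

lemma bL_eq_bNat (L n : ℕ) : bL L n = bNat L n := by
  induction n using Nat.strong_induction_on with
  | _ n ih =>
    cases n with
    | zero => simp [bL_zero, bNat]
    | succ n =>
      rw [bL_succ, bNat, Fin.sum_univ_eq_sum_range
        (fun k => n.choose k * (n + 1).choose k ^ L * bNat L k), Nat.cast_sum]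
      refine sum_congr rfl fun k hk => ?_
      rw [ih k (by simpa using hk)]
      push_cast
      ring

/-- each `b_L(n)` is a positive integer. -/
theorem stmt_1 (L n : ℕ) : ∃ m : ℕ, 0 < m ∧ bL L n = (m : ℚ) :=
  ⟨bNat L n, bNat_pos L n, bL_eq_bNat L n⟩
end

section
/- For all integers L ≥ 0 and p ≥ 0, the numbers b_L(p,n) satisfy: b_L(p,0) = 1; b_L(p,k) = 0 for 1 ≤ k ≤ p; b_L(p,p+1) = 1; and for every n ≥ p, b_L(p,n+1) = ∑_{k=0}^{n−p} C(n,k) · C(n+1,k)^L · b_L(p,k), where C(m,j) denotes the binomial coefficient. -/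
open PowerSeries Finset

/-!
Since `expPS f` is the substitution of `f` into `exp`, the chain rule gives
`(expPS f)' = expPS f · f'`. Writing `e_k`, `f_k` for the coefficients, comparing coefficients
of `z^n` yields `(n+1) e_{n+1} = ∑_k e_k (n-k+1) f_{n-k+1}`, and for `f = hypFtail L p` only the
terms with `n - k ≥ p` survive. Multiplying by `((n+1)!)^{L+1}` turns each surviving term into
`(n+1) C(n,k) C(n+1,k)^L b_L(p,k)`; the initial values follow from the same recursion,
the sum being empty when `n < p`.
-/

namespace PowerSeries

variable {f : ℚ⟦X⟧}

theorem coeff_pow_eq_zero_of_lt (hf : constantCoeff f = 0) {n l : ℕ} (h : n < l) :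
    coeff n (f ^ l) = 0 := by
  have hX : (X : ℚ⟦X⟧) ^ l ∣ f ^ l := pow_dvd_pow_of_dvd (X_dvd_iff.2 hf) l
  exact X_pow_dvd_iff.1 hX n h

theorem expPS_eq_subst_exp (hf : constantCoeff f = 0) : expPS f = (exp ℚ).subst f := by
  ext n
  rw [coeff_subst' (HasSubst.of_constantCoeff_zero' hf), expPS, coeff_mk,
    finsum_eq_sum_of_support_subset (s := range (n + 1))]
  · refine sum_congr rfl fun l _ => ?_
    simp [div_eq_inv_mul]
  · intro l hl
    by_contra hln
    simp only [coe_range, Set.mem_Iio, not_lt] at hln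
    simp [coeff_pow_eq_zero_of_lt hf (Nat.lt_of_succ_le hln)] at hl

theorem derivative_expPS (hf : constantCoeff f = 0) :
    d⁄dX ℚ (expPS f) = expPS f * d⁄dX ℚ f := by
  rw [expPS_eq_subst_exp hf, derivative_subst (HasSubst.of_constantCoeff_zero' hf),
    derivative_exp]

theorem succ_mul_coeff_succ_expPS (hf : constantCoeff f = 0) (n : ℕ) :
    ((n : ℚ) + 1) * coeff (n + 1) (expPS f) =
      ∑ k ∈ range (n + 1),
        coeff k (expPS f) * (((n - k + 1 : ℕ) : ℚ) * coeff (n - k + 1) f) := by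
  have h := congrArg (coeff n) (derivative_expPS hf)
  rw [coeff_derivative, coeff_mul, Nat.sum_antidiagonal_eq_sum_range_succ
    (fun i j => coeff i (expPS f) * coeff j (d⁄dX ℚ f))] at h
  rw [mul_comm, h]
  refine sum_congr rfl fun k _ => ?_
  rw [coeff_derivative]
  push_cast
  ring

end PowerSeries

theorem coeff_hypFtail_of_le (L : ℕ) {p m : ℕ} (h : m ≤ p) : coeff m (hypFtail L p) = 0 := by
  simp [hypFtail, h]

theorem coeff_hypFtail_of_lt (L : ℕ) {p m : ℕ} (h : p < m) :
    coeff m (hypFtail L p) = 1 / (m.factorial : ℚ) ^ (L + 1) := by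
  simp [hypFtail, Nat.not_le.2 h]

theorem constantCoeff_hypFtail (L p : ℕ) : constantCoeff (hypFtail L p) = 0 := by
  rw [← coeff_zero_eq_constantCoeff_apply, coeff_hypFtail_of_le L (Nat.zero_le p)]

theorem Nat.factorial_succ_pow_mul_sub_add_one {n k : ℕ} (hk : k ≤ n) (L : ℕ) :
    (n + 1).factorial ^ (L + 1) * (n - k + 1) =
      (n + 1) * n.choose k * (n + 1).choose k ^ L *
        (k.factorial * (n - k + 1).factorial) ^ (L + 1) := by
  have hsub : n + 1 - k = n - k + 1 := by omega
  have hfac : (n + 1).factorial = (n + 1).choose k * (k.factorial * (n - k + 1).factorial) := by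
    rw [← hsub, ← mul_assoc, Nat.choose_mul_factorial_mul_factorial (by omega)]
  have hchoose : (n + 1).choose k * (n - k + 1) = (n + 1) * n.choose k := by
    rw [← hsub, ← Nat.choose_mul_succ_eq, mul_comm]
  calc (n + 1).factorial ^ (L + 1) * (n - k + 1)
      = (n + 1).choose k ^ L * ((n + 1).choose k * (n - k + 1)) *
          (k.factorial * (n - k + 1).factorial) ^ (L + 1) := by
        rw [hfac, mul_pow]; ring
    _ = _ := by rw [hchoose]; ring

theorem bLp_zero (L p : ℕ) : bLp L p 0 = 1 := by
  simp [bLp, expPS]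

theorem bLp_succ (L p n : ℕ) :
    bLp L p (n + 1) =
      ∑ k ∈ range (n + 1 - p), (n.choose k : ℚ) * ((n + 1).choose k : ℚ) ^ L * bLp L p k := by
  have hrec := succ_mul_coeff_succ_expPS (constantCoeff_hypFtail L p) n
  rw [← sum_subset (range_subset_range.2 (Nat.sub_le (n + 1) p)) fun k hkn hk => by
    rw [mem_range] at hkn hk
    rw [coeff_hypFtail_of_le L (m := n - k + 1) (by omega), mul_zero, mul_zero]] at hrec
  refine mul_left_cancel₀ (Nat.cast_add_one_ne_zero n) ?_
  rw [bLp, mul_left_comm, hrec, mul_sum, mul_sum]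
  refine sum_congr rfl fun k hk => ?_
  rw [mem_range] at hk
  have hfac : ((n + 1).factorial : ℚ) ^ (L + 1) * ((n - k + 1 : ℕ) : ℚ) =
      ((n : ℚ) + 1) * n.choose k * (n + 1).choose k ^ L *
        ((k.factorial : ℚ) * (n - k + 1).factorial) ^ (L + 1) := by
    exact_mod_cast Nat.factorial_succ_pow_mul_sub_add_one (by omega : k ≤ n) L
  rw [coeff_hypFtail_of_lt L (m := n - k + 1) (by omega), bLp]
  have : ((n - k + 1).factorial : ℚ) ≠ 0 := by positivity
  field_simp
  linear_combination coeff k (expPS (hypFtail L p)) * hfac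

/-- `b_L(p,0) = 1`; `b_L(p,k) = 0` for `1 ≤ k ≤ p`;
`b_L(p,p+1) = 1`; and for `n ≥ p`,
`b_L(p,n+1) = ∑_{k=0}^{n−p} C(n,k) · C(n+1,k)^L · b_L(p,k)`. -/
theorem stmt_17 (L p : ℕ) :
    bLp L p 0 = 1 ∧
    (∀ k : ℕ, 1 ≤ k → k ≤ p → bLp L p k = 0) ∧
    bLp L p (p + 1) = 1 ∧
    ∀ n : ℕ, p ≤ n →
      bLp L p (n + 1) =
        ∑ k ∈ Finset.range (n - p + 1),
          (n.choose k : ℚ) * ((n + 1).choose k : ℚ) ^ L * bLp L p k := by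
  refine ⟨bLp_zero L p, fun k hk hkp => ?_, ?_, fun n hn => ?_⟩
  · obtain ⟨n, rfl⟩ := Nat.exists_eq_add_of_le' hk
    rw [bLp_succ, Nat.sub_eq_zero_of_le hkp, range_zero, sum_empty]
  · rw [bLp_succ, Nat.add_sub_cancel_left]
    simp [bLp_zero]
  · rw [bLp_succ, Nat.sub_add_comm hn]
end
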